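/- A subset S of a real projective space P(V) is a saturated multi-convex set if and only if S is a proper subset of P(V) and Φ*(Φ(S)) = S, where Φ(S) is the set of hyperplanes avoiding S viewed as points of P(V*) and Φ* is the dual map. Consequently, Φ restricts to an order-reversing bijection (anti-isomorphism) between nonempty saturated multi-convex sets of P(V) and those of P(V*), with inverse Φ*. -/

import Mathlib

open scoped LinearAlgebra.Projectivization
open Projectivization

/-- The "positive" projective segment joining the points represented by `u` and `v`:
`{π(a•u + b•v) : a*b ≥ 0, (a,b) ≠ (0,0)}`. -/
def projSeg {W : Type*} [AddCommGroup W] [Module ℝ W] (u v : W) : Set (ℙ ℝ W) :=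
  {x | ∃ (a b : ℝ) (h : a • u + b • v ≠ 0),
    0 ≤ a * b ∧ x = Projectivization.mk ℝ (a • u + b • v) h}

/-- The "negative" projective segment joining the points represented by `u` and `v`:
`{π(a•u + b•v) : a*b ≤ 0, (a,b) ≠ (0,0)}`. -/
def projSegN {W : Type*} [AddCommGroup W] [Module ℝ W] (u v : W) : Set (ℙ ℝ W) :=
  {x | ∃ (a b : ℝ) (h : a • u + b • v ≠ 0),
    a * b ≤ 0 ∧ x = Projectivization.mk ℝ (a • u + b • v) h}

/-- A set in a real projective space is projective convex if for any two distinct points of it,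
exactly one of the two projective segments joining them is contained in it. -/
def IsProjConvex {W : Type*} [AddCommGroup W] [Module ℝ W] (S : Set (ℙ ℝ W)) : Prop :=
  ∀ p ∈ S, ∀ q ∈ S, p ≠ q →
    Xor' (projSeg p.rep q.rep ⊆ S) (projSegN p.rep q.rep ⊆ S)

/-- The quotient topology on a real projective space. -/
noncomputable instance projTopInst {W : Type*} [NormedAddCommGroup W] [NormedSpace ℝ W] :
    TopologicalSpace (ℙ ℝ W) :=
  instTopologicalSpaceQuotient

noncomputable instance dualNACG {W : Type*} [NormedAddCommGroup W] [NormedSpace ℝ W]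
    [FiniteDimensional ℝ W] : NormedAddCommGroup (Module.Dual ℝ W) :=
  NormedAddCommGroup.induced _ _
    (LinearMap.toContinuousLinearMap : Module.Dual ℝ W ≃ₗ[ℝ] (W →L[ℝ] ℝ))
    (LinearEquiv.injective _)

noncomputable instance dualNS {W : Type*} [NormedAddCommGroup W] [NormedSpace ℝ W]
    [FiniteDimensional ℝ W] : NormedSpace ℝ (Module.Dual ℝ W) :=
  NormedSpace.induced ℝ _ _
    (LinearMap.toContinuousLinearMap : Module.Dual ℝ W ≃ₗ[ℝ] (W →L[ℝ] ℝ))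

/-- A saturated multi-convex set: an intersection of a nonempty family of open projective
convex sets. -/
def IsSatMultiConvex {W : Type*} [NormedAddCommGroup W] [NormedSpace ℝ W]
    (C : Set (ℙ ℝ W)) : Prop :=
  ∃ F : Set (Set (ℙ ℝ W)), F.Nonempty ∧ (∀ S ∈ F, IsOpen S ∧ IsProjConvex S) ∧ C = ⋂₀ F

/-- `Φ(S)`: the hyperplanes disjoint from `S`, viewed as points of the dual projective space. -/
def PhiMap {W : Type*} [AddCommGroup W] [Module ℝ W] (S : Set (ℙ ℝ W)) :
    Set (ℙ ℝ (Module.Dual ℝ W)) :=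
  {ψ | ∀ x ∈ S, ψ.rep x.rep ≠ 0}

/-- `Φ*`: the dual map, via the canonical pairing (identifying `V** ≅ V`). -/
def PhiStar {W : Type*} [AddCommGroup W] [Module ℝ W] (T : Set (ℙ ℝ (Module.Dual ℝ W))) :
    Set (ℙ ℝ W) :=
  {x | ∀ ψ ∈ T, ψ.rep x.rep ≠ 0}

/-!
The heart of the criterion is a separation theorem: if `C` is open and projectively convex and
`x ∉ C`, some hyperplane through `x` misses `C`. Lift `C` to the double cone
`L = liftCone C ⊆ V ∖ {0}` and fix `u ∈ L`. Projective convexity says that for every `v ∈ L`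
exactly one of `v`, `-v` is joined to `u` by a straight segment inside `L`, so `L = H ∪ -H` with
`H = halfCone C u` open and disjoint from `-H`. By connectedness a segment inside `L` starting in
`H` stays in `H`, which makes `H` convex. Hahn–Banach separates `H` from the line through `x`; the
separating functional vanishes on that line and is negative on `H`, hence nonzero on `L = H ∪ -H`.

Hence `Φ*(Φ(C)) = C` for open projectively convex `C`, and then for intersections of such sets;
conversely `Φ*(T)` is the intersection of the complements of the hyperplanes in `T`, which are
open and projectively convex. The statements on `ℙ(V*)` come from the same criterion for `V*`
and the identification `V** ≅ V`, and the bijection is the Galois connection `Φ ⊣ Φ*` restricted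
to its closed sets.
-/

open Set Module
open scoped Pointwise Convex

section Rep
variable {K W : Type*} [Field K] [AddCommGroup W] [Module K W]

theorem map_mk_rep_eq_zero_iff {M : Type*} [AddCommGroup M] [Module K M] (f : W →ₗ[K] M)
    {v : W} (hv : v ≠ 0) : f (mk K v hv).rep = 0 ↔ f v = 0 := by
  obtain ⟨a, ha⟩ := exists_smul_eq_mk_rep K v hv
  rw [← ha, Units.smul_def, map_smul, smul_eq_zero, or_iff_right a.ne_zero]

theorem mk_rep_apply_eq_zero_iff {φ : Dual K W} (hφ : φ ≠ 0) (v : W) :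
    (mk K φ hφ).rep v = 0 ↔ φ v = 0 :=
  map_mk_rep_eq_zero_iff (Dual.eval K W v) hφ

theorem linearIndependent_rep_pair_iff (p q : ℙ K W) :
    LinearIndependent K ![p.rep, q.rep] ↔ p ≠ q := by
  rw [← independent_mk_iff_LinearIndependent p.rep_nonzero q.rep_nonzero,
    mk_rep, mk_rep, independent_pair_iff_ne]

end Rep

section Galois
variable {W : Type*} [AddCommGroup W] [Module ℝ W]

theorem gc_phiMap_phiStar :
    GaloisConnection (OrderDual.toDual ∘ PhiMap (W := W)) (PhiStar ∘ OrderDual.ofDual) :=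
  fun _ _ => ⟨fun h _ hx _ hψ => h hψ _ hx, fun h _ hψ _ hx => h hx _ hψ⟩

theorem phiMap_antitone : Antitone (PhiMap (W := W)) :=
  gc_phiMap_phiStar.monotone_l

theorem phiStar_antitone : Antitone (PhiStar (W := W)) :=
  fun _ _ h => gc_phiMap_phiStar.monotone_u h

theorem subset_phiStar_phiMap (S : Set (ℙ ℝ W)) : S ⊆ PhiStar (PhiMap S) :=
  gc_phiMap_phiStar.le_u_l S

theorem phiMap_phiStar_phiMap (S : Set (ℙ ℝ W)) : PhiMap (PhiStar (PhiMap S)) = PhiMap S :=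
  gc_phiMap_phiStar.l_u_l_eq_l S

theorem phiMap_empty : PhiMap (∅ : Set (ℙ ℝ W)) = univ :=
  gc_phiMap_phiStar.l_bot

theorem phiStar_empty : PhiStar (∅ : Set (ℙ ℝ (Dual ℝ W))) = univ :=
  gc_phiMap_phiStar.u_top

theorem mk_mem_phiMap_iff {S : Set (ℙ ℝ W)} {φ : Dual ℝ W} (hφ : φ ≠ 0) :
    mk ℝ φ hφ ∈ PhiMap S ↔ ∀ x ∈ S, φ x.rep ≠ 0 :=
  forall₂_congr fun x _ => (mk_rep_apply_eq_zero_iff hφ x.rep).not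

theorem nonempty_of_phiMap_ne_univ {S : Set (ℙ ℝ W)} (h : PhiMap S ≠ univ) : S.Nonempty :=
  nonempty_iff_ne_empty.2 fun hS => h (hS ▸ phiMap_empty)

theorem nonempty_of_phiStar_ne_univ {T : Set (ℙ ℝ (Dual ℝ W))} (h : PhiStar T ≠ univ) :
    T.Nonempty :=
  nonempty_iff_ne_empty.2 fun hT => h (hT ▸ phiStar_empty)

theorem phiMap_subset_phiMap_iff {S S' : Set (ℙ ℝ W)} (hS : PhiStar (PhiMap S) = S)
    (hS' : PhiStar (PhiMap S') = S') : PhiMap S' ⊆ PhiMap S ↔ S ⊆ S' :=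
  ⟨fun h => hS ▸ hS' ▸ phiStar_antitone h, fun h => phiMap_antitone h⟩

end Galois

theorem xor_pos_neg_pos {a : ℝ} (ha : a ≠ 0) : Xor (0 < a) (0 < -a) := by grind

section Cone
variable {W : Type*} [AddCommGroup W] [Module ℝ W] {C : Set (ℙ ℝ W)} {u v w : W}

def liftCone (C : Set (ℙ ℝ W)) : Set W :=
  {v | ∃ hv : v ≠ 0, mk ℝ v hv ∈ C}

theorem ne_zero_of_mem_liftCone (hv : v ∈ liftCone C) : v ≠ 0 := hv.1

theorem mk_mem_iff_mem_liftCone (hv : v ≠ 0) :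
    mk ℝ v hv ∈ C ↔ v ∈ liftCone C :=
  ⟨fun h => ⟨hv, h⟩, fun ⟨_, h⟩ => h⟩

theorem rep_mem_liftCone_iff {x : ℙ ℝ W} : x.rep ∈ liftCone C ↔ x ∈ C := by
  rw [← mk_mem_iff_mem_liftCone x.rep_nonzero, mk_rep]

theorem smul_mem_liftCone_iff {c : ℝ} (hc : c ≠ 0) : c • v ∈ liftCone C ↔ v ∈ liftCone C := by
  constructor
  · rintro ⟨hcv, hmem⟩
    have hv : v ≠ 0 := right_ne_zero_of_smul hcv
    refine ⟨hv, ?_⟩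
    rwa [mk_eq_mk_iff' ℝ _ _ hcv hv |>.2 ⟨c, rfl⟩] at hmem
  · rintro ⟨hv, hmem⟩
    have hcv : c • v ≠ 0 := smul_ne_zero hc hv
    refine ⟨hcv, ?_⟩
    rwa [mk_eq_mk_iff' ℝ _ _ hcv hv |>.2 ⟨c, rfl⟩]

theorem neg_mem_liftCone_iff : -v ∈ liftCone C ↔ v ∈ liftCone C := by
  rw [← neg_one_smul ℝ v, smul_mem_liftCone_iff (by norm_num)]

theorem segment_subset_liftCone_iff :
    [v -[ℝ] w] ⊆ liftCone C ↔
      ∀ a b : ℝ, 0 ≤ a → 0 ≤ b → 0 < a ∨ 0 < b → a • v + b • w ∈ liftCone C := by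
  refine ⟨fun h a b ha hb hab => ?_, fun h z ⟨a, b, ha, hb, hab, hz⟩ => hz ▸ h a b ha hb ?_⟩
  · have hpos : 0 < a + b := by rcases hab with hab | hab <;> positivity
    have hmem := h ⟨a / (a + b), b / (a + b), by positivity, by positivity, by field_simp, rfl⟩
    rw [← smul_mem_liftCone_iff hpos.ne'] at hmem
    convert hmem using 1
    match_scalars <;> field_simp
  · by_contra! hab'
    linarith [hab'.1, hab'.2]

theorem segment_smul_left_subset_liftCone_iff {c : ℝ} (hc : c ≠ 0) :
    [c • v -[ℝ] w] ⊆ liftCone C ↔ [v -[ℝ] c⁻¹ • w] ⊆ liftCone C := by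
  simp only [segment_subset_liftCone_iff]
  refine forall₄_congr fun a b _ _ => imp_congr_right fun _ => ?_
  have h : c • (a • v + b • c⁻¹ • w) = a • c • v + b • w := by match_scalars <;> field_simp
  rw [← h, smul_mem_liftCone_iff hc]

theorem segment_smul_right_subset_liftCone_iff {c : ℝ} (hc : 0 < c) :
    [v -[ℝ] c • w] ⊆ liftCone C ↔ [v -[ℝ] w] ⊆ liftCone C := by
  simp only [segment_subset_liftCone_iff, smul_smul]
  constructor
  · intro h a b ha hb hab
    simpa [div_mul_cancel₀ b hc.ne'] using
      h a (b / c) ha (by positivity) (hab.imp_right (div_pos · hc))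
  · intro h a b ha hb hab
    exact h a (b * c) ha (by positivity) (hab.imp_right (mul_pos · hc))

theorem segment_self_smul_subset_liftCone_iff (hv : v ∈ liftCone C) {c : ℝ} :
    [v -[ℝ] c • v] ⊆ liftCone C ↔ 0 < c := by
  simp only [segment_subset_liftCone_iff, smul_smul, ← add_smul]
  constructor
  · intro h
    by_contra! hc
    have h0 := h (-c) 1 (by linarith) zero_le_one (Or.inr one_pos)
    rw [one_mul, neg_add_cancel, zero_smul] at h0
    exact ne_zero_of_mem_liftCone h0 rfl
  · intro hc a b ha hb hab
    have : 0 < a + b * c := by rcases hab with hab | hab <;> positivity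
    rwa [smul_mem_liftCone_iff this.ne']

theorem projSegN_eq_projSeg_neg (v w : W) : projSegN v w = projSeg v (-w) := by
  ext x
  constructor <;> rintro ⟨a, b, h, hab, rfl⟩ <;>
    exact ⟨a, -b, by simpa using h, by linarith [neg_mul_eq_mul_neg a b], by simp⟩

theorem projSeg_subset_iff (hvw : LinearIndependent ℝ ![v, w]) :
    projSeg v w ⊆ C ↔ [v -[ℝ] w] ⊆ liftCone C := by
  rw [segment_subset_liftCone_iff]
  constructor
  · intro h a b ha hb hab
    have hz : a • v + b • w ≠ 0 := fun h0 => by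
      obtain ⟨rfl, rfl⟩ := hvw.eq_zero_of_pair h0
      simp at hab
    exact (mk_mem_iff_mem_liftCone hz).1 (h ⟨a, b, hz, mul_nonneg ha hb, rfl⟩)
  · rintro h _ ⟨a, b, hz, hab, rfl⟩
    rw [mk_mem_iff_mem_liftCone]
    have pos_or_pos {a b : ℝ} (ha : 0 ≤ a) (hb : 0 ≤ b) (hz : a • v + b • w ≠ 0) :
        0 < a ∨ 0 < b := by
      by_contra! h'
      rw [le_antisymm h'.1 ha, le_antisymm h'.2 hb, zero_smul, zero_smul, add_zero] at hz
      exact hz rfl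
    rcases mul_nonneg_iff.1 hab with ⟨ha, hb⟩ | ⟨ha, hb⟩
    · exact h a b ha hb (pos_or_pos ha hb hz)
    · have hz' : (-a) • v + (-b) • w = -(a • v + b • w) := by module
      rw [← neg_mem_liftCone_iff, ← hz']
      exact h _ _ (neg_nonneg.2 ha) (neg_nonneg.2 hb)
        (pos_or_pos (neg_nonneg.2 ha) (neg_nonneg.2 hb) (by rw [hz']; exact neg_ne_zero.2 hz))

theorem xor_projSeg_subset_iff (hvw : LinearIndependent ℝ ![v, w]) :
    Xor (projSeg v w ⊆ C) (projSegN v w ⊆ C) ↔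
      Xor ([v -[ℝ] w] ⊆ liftCone C) ([v -[ℝ] -w] ⊆ liftCone C) := by
  rw [projSegN_eq_projSeg_neg, projSeg_subset_iff hvw,
    projSeg_subset_iff (LinearIndependent.pair_neg_right_iff.2 hvw)]

theorem xor_segment_smul_smul_subset_iff {α β : ℝ} (hα : α ≠ 0) (hβ : β ≠ 0) :
    Xor ([α • v -[ℝ] β • w] ⊆ liftCone C) ([α • v -[ℝ] -(β • w)] ⊆ liftCone C) ↔
      Xor ([v -[ℝ] w] ⊆ liftCone C) ([v -[ℝ] -w] ⊆ liftCone C) := by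
  rw [segment_smul_left_subset_liftCone_iff hα, segment_smul_left_subset_liftCone_iff hα,
    ← smul_neg, smul_smul, smul_smul]
  rcases (mul_ne_zero (inv_ne_zero hα) hβ).lt_or_gt with hγ | hγ
  · have e₁ : (α⁻¹ * β) • w = -(α⁻¹ * β) • -w := (neg_smul_neg _ _).symm
    have e₂ : (α⁻¹ * β) • -w = -(α⁻¹ * β) • w := by rw [smul_neg, neg_smul]
    rw [e₁, e₂,
      segment_smul_right_subset_liftCone_iff (neg_pos.2 hγ),
      segment_smul_right_subset_liftCone_iff (neg_pos.2 hγ), xor_comm]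
  · rw [segment_smul_right_subset_liftCone_iff hγ, segment_smul_right_subset_liftCone_iff hγ]

theorem isProjConvex_iff_xor_segment_subset :
    IsProjConvex C ↔ ∀ v ∈ liftCone C, ∀ w ∈ liftCone C, LinearIndependent ℝ ![v, w] →
      Xor ([v -[ℝ] w] ⊆ liftCone C) ([v -[ℝ] -w] ⊆ liftCone C) := by
  constructor
  · rintro hconv v ⟨hv, hvC⟩ w ⟨hw, hwC⟩ hvw
    have hpq : mk ℝ v hv ≠ mk ℝ w hw := by
      rwa [← independent_pair_iff_ne, independent_mk_iff_LinearIndependent]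
    have hxor : Xor _ _ := hconv _ hvC _ hwC hpq
    rw [xor_projSeg_subset_iff ((linearIndependent_rep_pair_iff _ _).2 hpq)] at hxor
    obtain ⟨α, hα⟩ := exists_smul_eq_mk_rep ℝ v hv
    obtain ⟨β, hβ⟩ := exists_smul_eq_mk_rep ℝ w hw
    rwa [← hα, ← hβ, Units.smul_def, Units.smul_def,
      xor_segment_smul_smul_subset_iff α.ne_zero β.ne_zero] at hxor
  · intro h p hp q hq hpq
    have hind := (linearIndependent_rep_pair_iff p q).2 hpq
    exact (xor_projSeg_subset_iff hind).2
      (h _ (rep_mem_liftCone_iff.2 hp) _ (rep_mem_liftCone_iff.2 hq) hind)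

def halfCone (C : Set (ℙ ℝ W)) (u : W) : Set W :=
  {v | [u -[ℝ] v] ⊆ liftCone C}

theorem halfCone_subset_liftCone : halfCone C u ⊆ liftCone C :=
  fun v hv => hv (right_mem_segment ℝ u v)

theorem smul_mem_halfCone (hv : v ∈ halfCone C u) {c : ℝ} (hc : 0 < c) :
    c • v ∈ halfCone C u :=
  (segment_smul_right_subset_liftCone_iff hc).2 hv

theorem IsProjConvex.xor_mem_halfCone (hconv : IsProjConvex C) (hu : u ∈ liftCone C)
    (hv : v ∈ liftCone C) : Xor (v ∈ halfCone C u) (-v ∈ halfCone C u) := by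
  by_cases hind : LinearIndependent ℝ ![u, v]
  · exact isProjConvex_iff_xor_segment_subset.1 hconv u hu v hv hind
  obtain ⟨a, rfl⟩ : ∃ a : ℝ, a • u = v := by
    simpa [LinearIndependent.pair_iff' (ne_zero_of_mem_liftCone hu)] using hind
  have ha : a ≠ 0 := by rintro rfl; exact ne_zero_of_mem_liftCone hv (zero_smul ℝ u)
  simp only [halfCone, mem_ofPred_eq, ← neg_smul, segment_self_smul_subset_liftCone_iff hu]
  exact xor_pos_neg_pos ha

theorem IsProjConvex.liftCone_eq_union (hconv : IsProjConvex C) (hu : u ∈ liftCone C) :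
    liftCone C = halfCone C u ∪ -halfCone C u := by
  refine Subset.antisymm (fun v hv => (hconv.xor_mem_halfCone hu hv).or) ?_
  rintro v (hv | hv)
  · exact halfCone_subset_liftCone hv
  · exact neg_mem_liftCone_iff.1 (halfCone_subset_liftCone hv)

theorem IsProjConvex.disjoint_halfCone_neg (hconv : IsProjConvex C) (hu : u ∈ liftCone C) :
    Disjoint (halfCone C u) (-halfCone C u) := by
  refine Set.disjoint_left.2 fun v hv hnv => ?_
  rcases hconv.xor_mem_halfCone hu (halfCone_subset_liftCone hv) with ⟨_, h⟩ | ⟨_, h⟩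
  exacts [h hnv, h hv]

end Cone

section Topology
variable {W : Type*} [NormedAddCommGroup W] [NormedSpace ℝ W] {C : Set (ℙ ℝ W)} {u v w : W}

theorem isOpen_iff_isOpen_liftCone : IsOpen C ↔ IsOpen (liftCone C) := by
  have hC : liftCone C = Subtype.val '' (mk' ℝ ⁻¹' C) := by
    ext v
    exact ⟨fun ⟨hv, h⟩ => ⟨⟨v, hv⟩, h, rfl⟩, by rintro ⟨⟨v, hv⟩, h, rfl⟩; exact ⟨hv, h⟩⟩
  rw [hC]
  exact isQuotientMap_quotient_mk'.isOpen_preimage.symm.trans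
    isOpen_compl_singleton.isOpenEmbedding_subtypeVal.isOpen_iff_image_isOpen

theorem isOpen_halfCone (hC : IsOpen C) (u : W) : IsOpen (halfCone C u) := by
  have hmem : ∀ v, v ∈ halfCone C u ↔ ∀ t ∈ Icc (0 : ℝ) 1, (1 - t) • u + t • v ∈ liftCone C :=
    fun v => by rw [halfCone, mem_ofPred_eq, segment_eq_image, image_subset_iff]; rfl
  have hcont : Continuous fun z : W × ℝ => (1 - z.2) • u + z.2 • z.1 := by fun_prop
  refine isOpen_iff_eventually.2 fun v hv => ?_
  refine (isCompact_Icc.eventually_forall_of_forall_eventually fun t ht => ?_).mono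
    fun v' h => (hmem v').2 h
  exact hcont.continuousAt.eventually_mem
    ((isOpen_iff_isOpen_liftCone.1 hC).mem_nhds ((hmem v).1 hv t ht))

theorem IsProjConvex.segment_subset_halfCone (hconv : IsProjConvex C) (hC : IsOpen C)
    (hu : u ∈ liftCone C) (hv : v ∈ halfCone C u) (hvw : [v -[ℝ] w] ⊆ liftCone C) :
    [v -[ℝ] w] ⊆ halfCone C u :=
  (convex_segment v w).isPreconnected.subset_left_of_subset_union (isOpen_halfCone hC u)
    (isOpen_halfCone hC u).neg (hconv.disjoint_halfCone_neg hu)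
    (hconv.liftCone_eq_union hu ▸ hvw) ⟨v, left_mem_segment ℝ v w, hv⟩

theorem IsProjConvex.convex_halfCone (hconv : IsProjConvex C) (hC : IsOpen C)
    (hu : u ∈ liftCone C) : Convex ℝ (halfCone C u) := by
  refine convex_iff_segment_subset.2 fun v hv w hw => hconv.segment_subset_halfCone hC hu hv ?_
  have hvL := halfCone_subset_liftCone hv
  have hwL := halfCone_subset_liftCone hw
  have not_neg_mem : -w ∉ halfCone C u :=
    fun h => Set.disjoint_left.1 (hconv.disjoint_halfCone_neg hu) hw (Set.mem_neg.2 h)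
  by_cases hind : LinearIndependent ℝ ![v, w]
  · rcases isProjConvex_iff_xor_segment_subset.1 hconv v hvL w hwL hind with ⟨h, _⟩ | ⟨h, _⟩
    · exact h
    · exact absurd (hconv.segment_subset_halfCone hC hu hv h (right_mem_segment ℝ v (-w)))
        not_neg_mem
  obtain ⟨a, rfl⟩ : ∃ a : ℝ, a • v = w := by
    simpa [LinearIndependent.pair_iff' (ne_zero_of_mem_liftCone hvL)] using hind
  have ha : a ≠ 0 := by rintro rfl; exact ne_zero_of_mem_liftCone hwL (zero_smul ℝ v)
  refine (segment_self_smul_subset_liftCone_iff hvL).2 (ha.lt_or_gt.resolve_left fun ha' => ?_)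
  exact not_neg_mem (by rw [← neg_smul]; exact smul_mem_halfCone hv (neg_pos.2 ha'))

theorem IsProjConvex.exists_dual_apply_rep_eq_zero (hconv : IsProjConvex C) (hC : IsOpen C)
    (hne : C.Nonempty) {x : ℙ ℝ W} (hx : x ∉ C) :
    ∃ φ : Dual ℝ W, φ x.rep = 0 ∧ ∀ y ∈ C, φ y.rep ≠ 0 := by
  obtain ⟨p, hp⟩ := hne
  have hu := rep_mem_liftCone_iff.2 hp
  have hdisj : Disjoint (halfCone C p.rep) (ℝ ∙ x.rep) := by
    refine Set.disjoint_right.2 fun v hv hvH => hx ?_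
    obtain ⟨t, rfl⟩ := Submodule.mem_span_singleton.1 hv
    have htx := halfCone_subset_liftCone hvH
    rwa [smul_mem_liftCone_iff (left_ne_zero_of_smul (ne_zero_of_mem_liftCone htx)),
      rep_mem_liftCone_iff] at htx
  obtain ⟨f, r, hfH, hfspan⟩ := geometric_hahn_banach_open (hconv.convex_halfCone hC hu)
    (isOpen_halfCone hC _) (ℝ ∙ x.rep).convex hdisj
  have hr : r ≤ 0 := by simpa using hfspan 0 (zero_mem _)
  have hneg : ∀ v ∈ halfCone C p.rep, f v < 0 := fun v hv => (hfH v hv).trans_le hr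
  -- `f` is bounded below by `r` on the line `ℝ ∙ x.rep`, hence vanishes on it
  have hfx : f x.rep = 0 := by
    by_contra hfx
    have := hfspan (((r - 1) / f x.rep) • x.rep)
      (Submodule.smul_mem _ _ (Submodule.mem_span_singleton_self _))
    rw [map_smul, smul_eq_mul, div_mul_cancel₀ _ hfx] at this
    linarith
  refine ⟨f, hfx, fun y hy => ?_⟩
  rcases (hconv.xor_mem_halfCone hu (rep_mem_liftCone_iff.2 hy)).or with h | h
  · exact (hneg _ h).ne
  · have := hneg _ h
    rw [map_neg, neg_lt_zero] at this
    exact this.ne'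

end Topology

section TwoLeFinrank
variable {W : Type*} [AddCommGroup W] [Module ℝ W]

theorem exists_ne_of_two_le_finrank (h2 : 2 ≤ finrank ℝ W) : ∃ p q : ℙ ℝ W, p ≠ q := by
  have : Nontrivial W := Module.nontrivial_of_finrank_pos (R := ℝ) (by omega)
  obtain ⟨v, hv⟩ := exists_ne (0 : W)
  obtain ⟨w, hvw⟩ := exists_linearIndependent_pair_of_one_lt_finrank (R := ℝ) (by omega) hv
  refine ⟨mk ℝ v hv, mk ℝ w (by simpa using hvw.ne_zero 1), ?_⟩
  rwa [← independent_pair_iff_ne, independent_mk_iff_LinearIndependent]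

theorem not_isProjConvex_univ (h2 : 2 ≤ finrank ℝ W) : ¬ IsProjConvex (univ : Set (ℙ ℝ W)) := by
  intro hconv
  obtain ⟨p, q, hpq⟩ := exists_ne_of_two_le_finrank h2
  have h : Xor _ _ := hconv p trivial q trivial hpq
  simp only [subset_univ, xor_self] at h

end TwoLeFinrank

section FiniteDimensional
variable {W : Type*} [AddCommGroup W] [Module ℝ W] [FiniteDimensional ℝ W]

theorem exists_ne_zero_apply_eq_zero (h2 : 2 ≤ finrank ℝ W) (φ : Dual ℝ W) :
    ∃ v : W, v ≠ 0 ∧ φ v = 0 := by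
  have hker : LinearMap.ker φ ≠ ⊥ :=
    LinearMap.ker_ne_bot_of_finrank_lt (by rw [finrank_self]; omega)
  obtain ⟨v, hv, hv0⟩ := Submodule.exists_mem_ne_zero_of_ne_bot hker
  exact ⟨v, hv0, hv⟩

theorem exists_dual_ne_zero_apply_eq_zero (h2 : 2 ≤ finrank ℝ W) (v : W) :
    ∃ φ : Dual ℝ W, φ ≠ 0 ∧ φ v = 0 :=
  exists_ne_zero_apply_eq_zero (by rwa [Subspace.dual_finrank_eq]) (Dual.eval ℝ W v)

theorem phiMap_ne_univ (h2 : 2 ≤ finrank ℝ W) {S : Set (ℙ ℝ W)} (hS : S.Nonempty) :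
    PhiMap S ≠ univ := by
  obtain ⟨x, hx⟩ := hS
  obtain ⟨φ, hφ, hφx⟩ := exists_dual_ne_zero_apply_eq_zero h2 x.rep
  refine fun huniv => ?_
  have hmem : mk ℝ φ hφ ∈ PhiMap S := huniv ▸ mem_univ _
  exact (mk_mem_phiMap_iff hφ).1 hmem x hx hφx

theorem exists_bidual_rep_apply_eq_zero_iff (x : ℙ ℝ W) :
    ∃ Ξ : ℙ ℝ (Dual ℝ (Dual ℝ W)), ∀ φ : Dual ℝ W, Ξ.rep φ = 0 ↔ φ x.rep = 0 :=
  ⟨mk ℝ (Dual.eval ℝ W x.rep) ((eval_apply_eq_zero_iff ℝ x.rep).not.2 x.rep_nonzero),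
    fun φ => mk_rep_apply_eq_zero_iff _ φ⟩

theorem exists_rep_apply_eq_zero_iff_bidual (Ξ : ℙ ℝ (Dual ℝ (Dual ℝ W))) :
    ∃ x : ℙ ℝ W, ∀ φ : Dual ℝ W, Ξ.rep φ = 0 ↔ φ x.rep = 0 := by
  obtain ⟨v, hv⟩ := (bijective_dual_eval ℝ W).2 Ξ.rep
  have hv0 : v ≠ 0 := by rintro rfl; exact Ξ.rep_nonzero (by rw [← hv, map_zero])
  exact ⟨mk ℝ v hv0, fun φ => by
    rw [map_mk_rep_eq_zero_iff φ hv0, ← hv, Dual.eval_apply]⟩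

theorem phiStar_phiMap_eq_phiMap_phiStar (T : Set (ℙ ℝ (Dual ℝ W))) :
    PhiStar (PhiMap T) = PhiMap (PhiStar T) := by
  ext ψ
  constructor
  · intro h x hx
    obtain ⟨Ξ, hΞ⟩ := exists_bidual_rep_apply_eq_zero_iff x
    exact (hΞ _).not.1 (h Ξ fun φ hφ => (hΞ _).not.2 (hx φ hφ))
  · intro h Ξ hΞ
    obtain ⟨x, hx⟩ := exists_rep_apply_eq_zero_iff_bidual Ξ
    exact (hx _).not.2 (h x fun φ hφ => (hx _).not.1 (hΞ φ hφ))

end FiniteDimensional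

section Hyperplane
variable {W : Type*} [AddCommGroup W] [Module ℝ W]

theorem liftCone_setOf_apply_rep_ne_zero (φ : Dual ℝ W) :
    liftCone {x : ℙ ℝ W | φ x.rep ≠ 0} = {v | φ v ≠ 0} := by
  ext v
  refine ⟨fun ⟨hv, h⟩ => (map_mk_rep_eq_zero_iff φ hv).not.1 h, fun h => ?_⟩
  have hv : v ≠ 0 := by rintro rfl; exact h (map_zero φ)
  exact ⟨hv, (map_mk_rep_eq_zero_iff φ hv).not.2 h⟩

theorem segment_subset_setOf_apply_ne_zero_iff (φ : Dual ℝ W) {v w : W} (hv : φ v ≠ 0)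
    (hw : φ w ≠ 0) : [v -[ℝ] w] ⊆ {z | φ z ≠ 0} ↔ 0 < φ v * φ w := by
  have himg : φ '' [v -[ℝ] w] = [φ v -[ℝ] φ w] := by
    simpa using image_segment ℝ φ.toAffineMap v w
  calc [v -[ℝ] w] ⊆ {z | φ z ≠ 0} ↔ (0 : ℝ) ∉ φ '' [v -[ℝ] w] := by
        simp [subset_def]
    _ ↔ 0 < φ v * φ w := by
        rw [himg, segment_eq_uIcc, mem_uIcc, mul_pos_iff]
        rcases hv.lt_or_gt with hv | hv <;> rcases hw.lt_or_gt with hw | hw <;> grind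

theorem isProjConvex_setOf_apply_rep_ne_zero (φ : Dual ℝ W) :
    IsProjConvex {x : ℙ ℝ W | φ x.rep ≠ 0} := by
  rw [isProjConvex_iff_xor_segment_subset, liftCone_setOf_apply_rep_ne_zero]
  intro v hv w hw _
  have hw' : φ (-w) ≠ 0 := by rwa [map_neg, neg_ne_zero]
  rw [segment_subset_setOf_apply_ne_zero_iff φ hv hw,
    segment_subset_setOf_apply_ne_zero_iff φ hv hw', map_neg, mul_neg]
  exact xor_pos_neg_pos (mul_ne_zero hv hw)

theorem phiStar_eq_sInter (T : Set (ℙ ℝ (Dual ℝ W))) :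
    PhiStar T = ⋂₀ ((fun ψ => {x : ℙ ℝ W | ψ.rep x.rep ≠ 0}) '' T) := by
  ext x
  simp [PhiStar]

end Hyperplane

section Duality
variable {W : Type*} [NormedAddCommGroup W] [NormedSpace ℝ W] [FiniteDimensional ℝ W]

theorem isOpen_setOf_apply_rep_ne_zero (φ : Dual ℝ W) : IsOpen {x : ℙ ℝ W | φ x.rep ≠ 0} := by
  rw [isOpen_iff_isOpen_liftCone, liftCone_setOf_apply_rep_ne_zero]
  exact isOpen_ne_fun (LinearMap.continuous_of_finiteDimensional φ) continuous_const

theorem isSatMultiConvex_phiStar {T : Set (ℙ ℝ (Dual ℝ W))} (hT : T.Nonempty) :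
    IsSatMultiConvex (PhiStar T) := by
  refine ⟨_, hT.image _, ?_, phiStar_eq_sInter T⟩
  rintro _ ⟨ψ, -, rfl⟩
  exact ⟨isOpen_setOf_apply_rep_ne_zero ψ.rep, isProjConvex_setOf_apply_rep_ne_zero ψ.rep⟩

theorem IsProjConvex.phiStar_phiMap_eq (h2 : 2 ≤ finrank ℝ W) {C : Set (ℙ ℝ W)}
    (hconv : IsProjConvex C) (hC : IsOpen C) : PhiStar (PhiMap C) = C := by
  refine (subset_phiStar_phiMap C).antisymm' fun x hx => ?_
  by_contra hxC
  obtain ⟨φ, hφ, hφx, hφC⟩ : ∃ φ : Dual ℝ W, φ ≠ 0 ∧ φ x.rep = 0 ∧ ∀ y ∈ C, φ y.rep ≠ 0 := by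
    rcases C.eq_empty_or_nonempty with rfl | ⟨y, hy⟩
    · obtain ⟨φ, hφ, hφx⟩ := exists_dual_ne_zero_apply_eq_zero h2 x.rep
      exact ⟨φ, hφ, hφx, by simp⟩
    · obtain ⟨φ, hφx, hφC⟩ := hconv.exists_dual_apply_rep_eq_zero hC ⟨y, hy⟩ hxC
      exact ⟨φ, by rintro rfl; exact hφC y hy rfl, hφx, hφC⟩
  exact hx _ ((mk_mem_phiMap_iff hφ).2 hφC) ((mk_rep_apply_eq_zero_iff hφ _).2 hφx)

theorem isSatMultiConvex_iff (h2 : 2 ≤ finrank ℝ W) (S : Set (ℙ ℝ W)) :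
    IsSatMultiConvex S ↔ S ≠ univ ∧ PhiStar (PhiMap S) = S := by
  constructor
  · rintro ⟨F, ⟨S₀, hS₀⟩, hF, rfl⟩
    refine ⟨fun huniv => not_isProjConvex_univ h2 ?_,
      (subset_phiStar_phiMap _).antisymm' (subset_sInter fun S₁ hS₁ => ?_)⟩
    · rw [← eq_univ_of_univ_subset (huniv ▸ sInter_subset_of_mem hS₀)]
      exact (hF S₀ hS₀).2
    · calc PhiStar (PhiMap (⋂₀ F)) ⊆ PhiStar (PhiMap S₁) :=
            phiStar_antitone (phiMap_antitone (sInter_subset_of_mem hS₁))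
        _ = S₁ := (hF S₁ hS₁).2.phiStar_phiMap_eq h2 (hF S₁ hS₁).1
  · rintro ⟨hS, hfix⟩
    rw [← hfix]
    exact isSatMultiConvex_phiStar (nonempty_of_phiStar_ne_univ (by rwa [hfix]))

theorem isSatMultiConvex_dual_iff (h2 : 2 ≤ finrank ℝ W) (T : Set (ℙ ℝ (Dual ℝ W))) :
    IsSatMultiConvex T ↔ T ≠ univ ∧ PhiMap (PhiStar T) = T := by
  rw [isSatMultiConvex_iff (by rwa [Subspace.dual_finrank_eq]), phiStar_phiMap_eq_phiMap_phiStar]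

theorem bijOn_phiMap (h2 : 2 ≤ finrank ℝ W) :
    BijOn (PhiMap (W := W)) {S | S.Nonempty ∧ IsSatMultiConvex S}
      {T | T.Nonempty ∧ IsSatMultiConvex T} := by
  have crit {S : Set (ℙ ℝ W)} (hS : IsSatMultiConvex S) := (isSatMultiConvex_iff h2 S).1 hS
  refine ⟨fun S ⟨hne, hS⟩ => ⟨?_, ?_⟩, fun S ⟨_, hS⟩ S' ⟨_, hS'⟩ h => ?_, fun T ⟨hne, hT⟩ => ?_⟩
  · exact nonempty_of_phiStar_ne_univ (by rw [(crit hS).2]; exact (crit hS).1)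
  · exact (isSatMultiConvex_dual_iff h2 _).2 ⟨phiMap_ne_univ h2 hne, phiMap_phiStar_phiMap S⟩
  · rw [← (crit hS).2, ← (crit hS').2, h]
  · obtain ⟨hT, hfix⟩ := (isSatMultiConvex_dual_iff h2 T).1 hT
    exact ⟨PhiStar T,
      ⟨nonempty_of_phiMap_ne_univ (by rwa [hfix]), isSatMultiConvex_phiStar hne⟩, hfix⟩

end Duality

/-- `S` is a saturated multi-convex set iff `S` is proper and `Φ*(Φ(S)) = S`; consequently `Φ`
restricts to an order-reversing bijection between nonempty saturated multi-convex sets of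
`ℙ(V)` and those of `ℙ(V*)`, with inverse `Φ*`. -/
theorem satMultiConvex_duality
    {V : Type*} [NormedAddCommGroup V] [NormedSpace ℝ V] [FiniteDimensional ℝ V]
    (h2 : 2 ≤ Module.finrank ℝ V) :
    (∀ S : Set (ℙ ℝ V), IsSatMultiConvex S ↔ (S ≠ Set.univ ∧ PhiStar (PhiMap S) = S)) ∧
    Set.BijOn (PhiMap (W := V))
      {S : Set (ℙ ℝ V) | S.Nonempty ∧ IsSatMultiConvex S}
      {T : Set (ℙ ℝ (Module.Dual ℝ V)) | T.Nonempty ∧ IsSatMultiConvex T} ∧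
    (∀ S : Set (ℙ ℝ V), S.Nonempty → IsSatMultiConvex S → PhiStar (PhiMap S) = S) ∧
    (∀ S S' : Set (ℙ ℝ V), S.Nonempty → IsSatMultiConvex S → S'.Nonempty →
      IsSatMultiConvex S' → (S ⊆ S' ↔ PhiMap S' ⊆ PhiMap S)) := by
  have closed (S : Set (ℙ ℝ V)) (hS : IsSatMultiConvex S) := ((isSatMultiConvex_iff h2 S).1 hS).2
  exact ⟨isSatMultiConvex_iff h2, bijOn_phiMap h2, fun S _ hS => closed S hS,
    fun S S' _ hS _ hS' => (phiMap_subset_phiMap_iff (closed S hS) (closed S' hS')).symm⟩
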